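/- arXiv:2402.16133 — 2 statements merged into one kernel-verified Lean document; each statement's English description precedes it below -/
import Mathlib

section
/- Let b be a slowly varying function, (α_i)_{i∈ℕ} positive reals with ∑_i α_i < ∞, and 1 < p < ∞. Then ∑_{i∈ℕ} α_i^p γ_b(α_i) ≲ (∑_{i∈ℕ} α_i)^p γ_b(∑_{i∈ℕ} α_i), with constant depending only on p and b. -/
/-!
With `ε = p - 1`, slow variation of `b` makes `t ↦ t ^ ε * γ_b(t)` almost increasing on `(0, ∞)`:
passing from `t` to `s ≥ t` changes `max t t⁻¹` by a factor at most `s / t` in either direction,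
and `b` then changes by a factor at most `K (s / t) ^ ε`. Hence, with `S = ∑ α_i`,
`α_i ^ p γ_b(α_i) = α_i · α_i ^ ε γ_b(α_i) ≤ K S ^ ε γ_b(S) · α_i`, and summing over `i` gives
`K S ^ p γ_b(S)`.
-/

open MeasureTheory Set ENNReal Filter Topology

noncomputable section

/-- A measurable function `b : [1,∞) → (0,∞)` is slowly varying if for every `ε > 0`,
`t ^ ε * b t` is equivalent (up to multiplicative constants) to a nondecreasing function
and `t ^ (-ε) * b t` is equivalent to a nonincreasing function on `[1,∞)`. -/
def SlowlyVarying (b : ℝ → ℝ) : Prop :=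
  (∀ t : ℝ, 1 ≤ t → 0 < b t) ∧
  ∀ ε : ℝ, 0 < ε →
    ((∃ g : ℝ → ℝ, MonotoneOn g (Set.Ici 1) ∧ ∃ c > (0:ℝ), ∃ C > (0:ℝ),
        ∀ t : ℝ, 1 ≤ t → c * g t ≤ t ^ ε * b t ∧ t ^ ε * b t ≤ C * g t) ∧
     (∃ g : ℝ → ℝ, AntitoneOn g (Set.Ici 1) ∧ ∃ c > (0:ℝ), ∃ C > (0:ℝ),
        ∀ t : ℝ, 1 ≤ t → c * g t ≤ t ^ (-ε) * b t ∧ t ^ (-ε) * b t ≤ C * g t))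

/-- `γ_b(t) = b (max {t, t⁻¹})` for `t > 0`. -/
def gammaB (b : ℝ → ℝ) (t : ℝ) : ℝ := b (max t t⁻¹)

theorem one_le_max_self_inv {t : ℝ} (ht : 0 < t) : 1 ≤ max t t⁻¹ := by
  rcases le_total 1 t with h | h
  · exact le_max_of_le_left h
  · exact le_max_of_le_right (one_le_inv₀ ht |>.2 h)

theorem max_self_inv_le_mul {x y : ℝ} (hx : 0 < x) (hy : 0 < y) :
    max x x⁻¹ ≤ max (x / y) (y / x) * max y y⁻¹ := by
  apply max_le
  · calc x = x / y * y := by field_simp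
      _ ≤ _ := by gcongr <;> first | positivity | exact le_max_left _ _
  · calc x⁻¹ = y / x * y⁻¹ := by field_simp
      _ ≤ _ := by gcongr <;> first | positivity | exact le_max_right _ _

theorem tsum_ofReal_le_ofReal_mul_tsum {ι : Type*} {f a : ι → ℝ} {M : ℝ} (ha : ∀ i, 0 ≤ a i)
    (hs : Summable a) (h : ∀ i, f i ≤ M * a i) :
    ∑' i, ENNReal.ofReal (f i) ≤ ENNReal.ofReal M * ENNReal.ofReal (∑' i, a i) := calc
  ∑' i, ENNReal.ofReal (f i) ≤ ∑' i, ENNReal.ofReal (M * a i) :=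
    ENNReal.tsum_le_tsum fun i => ENNReal.ofReal_le_ofReal (h i)
  _ = ENNReal.ofReal M * ENNReal.ofReal (∑' i, a i) := by
    simp_rw [ENNReal.ofReal_mul' (ha _)]
    rw [ENNReal.tsum_mul_left, ENNReal.ofReal_tsum_of_nonneg ha hs]

namespace SlowlyVarying

variable {b : ℝ → ℝ} {ε : ℝ}

theorem gammaB_pos (hb : SlowlyVarying b) {t : ℝ} (ht : 0 < t) : 0 < gammaB b t :=
  hb.1 _ (one_le_max_self_inv ht)

theorem exists_le_mul_div_rpow_of_le (hb : SlowlyVarying b) (hε : 0 < ε) :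
    ∃ K > 0, ∀ u v, 1 ≤ u → u ≤ v → b u ≤ K * (v / u) ^ ε * b v := by
  obtain ⟨⟨g, hg, c, hc, C, hC, hgb⟩, -⟩ := hb.2 ε hε
  refine ⟨C / c, by positivity, fun u v hu huv => ?_⟩
  have hv : 1 ≤ v := hu.trans huv
  have hweighted : u ^ ε * b u ≤ C / c * (v ^ ε * b v) := calc
    u ^ ε * b u ≤ C * g u := (hgb u hu).2
    _ ≤ C * g v := by gcongr; exact hg hu hv huv
    _ = C / c * (c * g v) := by field_simp
    _ ≤ C / c * (v ^ ε * b v) := mul_le_mul_of_nonneg_left (hgb v hv).1 (by positivity)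
  have hu' : 0 < u ^ ε := by positivity
  rw [Real.div_rpow (by linarith) (by linarith)]
  calc b u = u ^ ε * b u / u ^ ε := by field_simp
    _ ≤ C / c * (v ^ ε * b v) / u ^ ε := by gcongr
    _ = C / c * (v ^ ε / u ^ ε) * b v := by ring

theorem exists_le_mul_div_rpow_of_ge (hb : SlowlyVarying b) (hε : 0 < ε) :
    ∃ K > 0, ∀ u v, 1 ≤ v → v ≤ u → b u ≤ K * (u / v) ^ ε * b v := by
  obtain ⟨-, g, hg, c, hc, C, hC, hgb⟩ := hb.2 ε hε
  refine ⟨C / c, by positivity, fun u v hv hvu => ?_⟩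
  have hu : 1 ≤ u := hv.trans hvu
  have hweighted : u ^ (-ε) * b u ≤ C / c * (v ^ (-ε) * b v) := calc
    u ^ (-ε) * b u ≤ C * g u := (hgb u hu).2
    _ ≤ C * g v := by gcongr; exact hg hv hu hvu
    _ = C / c * (c * g v) := by field_simp
    _ ≤ C / c * (v ^ (-ε) * b v) := mul_le_mul_of_nonneg_left (hgb v hv).1 (by positivity)
  have hu' : 0 < u ^ ε := by positivity
  rw [Real.rpow_neg (by linarith), Real.rpow_neg (by linarith)] at hweighted
  rw [Real.div_rpow (by linarith) (by linarith)]
  calc b u = u ^ ε * ((u ^ ε)⁻¹ * b u) := by field_simp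
    _ ≤ u ^ ε * (C / c * ((v ^ ε)⁻¹ * b v)) := by gcongr
    _ = C / c * (u ^ ε / v ^ ε) * b v := by ring

theorem exists_le_mul_rpow (hb : SlowlyVarying b) (hε : 0 < ε) :
    ∃ K > 0, ∀ u v l, 1 ≤ u → 1 ≤ v → u ≤ l * v → v ≤ l * u → b u ≤ K * l ^ ε * b v := by
  obtain ⟨K₁, hK₁, h₁⟩ := hb.exists_le_mul_div_rpow_of_le hε
  obtain ⟨K₂, hK₂, h₂⟩ := hb.exists_le_mul_div_rpow_of_ge hε
  refine ⟨max K₁ K₂, by positivity, fun u v l hu hv hul hvl => ?_⟩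
  have hbv := hb.1 v hv
  rcases le_total u v with huv | hvu
  · calc b u ≤ K₁ * (v / u) ^ ε * b v := h₁ u v hu huv
      _ ≤ max K₁ K₂ * l ^ ε * b v := by
        gcongr
        · exact le_max_left _ _
        · exact div_le_of_le_mul₀ (by linarith) (by nlinarith) hvl
  · calc b u ≤ K₂ * (u / v) ^ ε * b v := h₂ u v hv hvu
      _ ≤ max K₁ K₂ * l ^ ε * b v := by
        gcongr
        · exact le_max_right _ _
        · exact div_le_of_le_mul₀ (by linarith) (by nlinarith) hul

theorem exists_rpow_mul_gammaB_le (hb : SlowlyVarying b) (hε : 0 < ε) :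
    ∃ K > 0, ∀ t s, 0 < t → t ≤ s → t ^ ε * gammaB b t ≤ K * (s ^ ε * gammaB b s) := by
  obtain ⟨K, hK, hcompare⟩ := hb.exists_le_mul_rpow hε
  refine ⟨K, hK, fun t s ht hts => ?_⟩
  have hs : 0 < s := ht.trans_le hts
  have hratio : max (t / s) (s / t) = s / t :=
    max_eq_right <| (div_le_one hs |>.2 hts).trans (one_le_div ht |>.2 hts)
  have hmax_t := max_self_inv_le_mul ht hs
  have hmax_s := max_self_inv_le_mul hs ht
  rw [hratio] at hmax_t
  rw [max_comm (s / t), hratio] at hmax_s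
  have hgamma : gammaB b t ≤ K * (s / t) ^ ε * gammaB b s :=
    hcompare _ _ _ (one_le_max_self_inv ht) (one_le_max_self_inv hs) hmax_t hmax_s
  calc t ^ ε * gammaB b t ≤ t ^ ε * (K * (s / t) ^ ε * gammaB b s) := by gcongr
    _ = K * (s ^ ε * gammaB b s) := by
      rw [Real.div_rpow hs.le ht.le]
      field_simp

end SlowlyVarying

/-- For a slowly varying `b`, `1 < p < ∞` and positive summable `(α_i)`,
`∑_i α_i^p γ_b(α_i) ≲ (∑_i α_i)^p γ_b(∑_i α_i)` with constant depending only on `p` and `b`. -/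
theorem gammaB_tsum_le (b : ℝ → ℝ) (hb : SlowlyVarying b) (p : ℝ) (hp : 1 < p) :
    ∃ C > (0:ℝ), ∀ α : ℕ → ℝ, (∀ i, 0 < α i) → Summable α →
      ∑' i, ENNReal.ofReal (α i ^ p * gammaB b (α i)) ≤
        ENNReal.ofReal C *
          ENNReal.ofReal ((∑' i, α i) ^ p * gammaB b (∑' i, α i)) := by
  obtain ⟨K, hK, hmono⟩ := hb.exists_rpow_mul_gammaB_le (sub_pos.2 hp)
  refine ⟨K, hK, fun α hα hsum => ?_⟩
  set S := ∑' i, α i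
  have hS : 0 < S := hsum.tsum_pos (fun i => (hα i).le) 0 (hα 0)
  have hγS := hb.gammaB_pos hS
  have hterm (i : ℕ) : α i ^ p * gammaB b (α i) ≤ K * (S ^ (p - 1) * gammaB b S) * α i := by
    have hαS : α i ≤ S := hsum.le_tsum i fun j _ => (hα j).le
    calc α i ^ p * gammaB b (α i) = α i ^ (p - 1) * gammaB b (α i) * α i := by
          rw [Real.rpow_sub_one (hα i).ne', div_mul_eq_mul_div, div_mul_cancel₀ _ (hα i).ne']
      _ ≤ K * (S ^ (p - 1) * gammaB b S) * α i :=
          mul_le_mul_of_nonneg_right (hmono _ _ (hα i) hαS) (hα i).le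
  calc _ ≤ ENNReal.ofReal (K * (S ^ (p - 1) * gammaB b S)) * ENNReal.ofReal S :=
        tsum_ofReal_le_ofReal_mul_tsum (fun i => (hα i).le) hsum hterm
    _ = _ := by
        rw [← ENNReal.ofReal_mul (by positivity), ← ENNReal.ofReal_mul hK.le,
          Real.rpow_sub_one hS.ne']
        congr 1
        field_simp
end
end

section
/- Let p(·) be a measurable exponent with 0 < p₋ ≤ p₊ < ∞ on a probability space, let 0 < q₁ ≤ q₂ ≤ ∞, and let b₁, b₂ be slowly varying functions with sup_{t≥1} b₂(t)/b₁(t) < ∞. Then L_{p(·),q₁,b₁} ⊆ L_{p(·),q₂,b₂}, and ‖f‖_{p(·),q₂,b₂} ≲ ‖f‖_{p(·),q₁,b₁}. -/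
/-!
Write `N t = ‖χ_{|f|>t}‖_{p(·)}`; it lies in `[0, 1]` and is nonincreasing, so
`γ_b (N t) = b (N t)⁻¹` and `b₂ ≤ M b₁` on `[1, ∞)` compares the two integrands pointwise.
Slow variation of `b₁` makes `u⁻¹ b₁ u` almost decreasing on `[1, ∞)`, hence
`g t = t N t γ_{b₁} (N t)` has `g t / t` almost decreasing. For such `g` the value `g t` is
controlled by the `L^{q₁}(dt/t)` mass of `g` on `(t/2, t)`, so `sup g ≲ ‖g‖_{q₁}`, and then
`‖g‖_{q₂}^{q₂} ≤ (sup g)^{q₂-q₁} ‖g‖_{q₁}^{q₁}`.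
-/

open MeasureTheory Set ENNReal Filter Topology

noncomputable section

variable {Ω : Type*} [MeasurableSpace Ω]

/-- The variable Lebesgue quasi-norm
`‖f‖_{p(·)} = inf {λ > 0 : ∫ (|f|/λ)^{p(·)} dμ ≤ 1}`. -/
def vLpNorm (μ : Measure Ω) (p : Ω → ℝ) (f : Ω → ℝ) : ℝ :=
  sInf {lam : ℝ | 0 < lam ∧ ∫⁻ ω, ENNReal.ofReal ((|f ω| / lam) ^ p ω) ∂μ ≤ 1}

/-- `f ∈ L_{p(·)}` : the modular is finite for some `λ > 0`. -/
def MemVLp (μ : Measure Ω) (p : Ω → ℝ) (f : Ω → ℝ) : Prop :=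
  ∃ lam > (0:ℝ), ∫⁻ ω, ENNReal.ofReal ((|f ω| / lam) ^ p ω) ∂μ ≤ 1

/-- `‖χ_A‖_{p(·)}`. -/
def chiNorm (μ : Measure Ω) (p : Ω → ℝ) (A : Set Ω) : ℝ :=
  vLpNorm μ p (A.indicator 1)

/-- The variable Lorentz–Karamata quasi-norm `‖f‖_{p(·),q,b}` (with `q ∈ (0,∞]`). -/
def vLKNorm (μ : Measure Ω) (p : Ω → ℝ) (q : ℝ≥0∞) (b : ℝ → ℝ) (f : Ω → ℝ) : ℝ≥0∞ :=
  if q = ∞ then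
    ⨆ t ∈ Set.Ioi (0:ℝ), ENNReal.ofReal
      (t * chiNorm μ p {ω | t < |f ω|} * gammaB b (chiNorm μ p {ω | t < |f ω|}))
  else
    (∫⁻ t in Set.Ioi (0:ℝ), ENNReal.ofReal
      ((t * chiNorm μ p {ω | t < |f ω|} * gammaB b (chiNorm μ p {ω | t < |f ω|})) ^ q.toReal / t))
      ^ (1 / q.toReal)

section ChiNorm

variable {μ : Measure Ω} [IsProbabilityMeasure μ] {p : Ω → ℝ}

lemma chiNorm_nonneg (μ : Measure Ω) (p : Ω → ℝ) (A : Set Ω) : 0 ≤ chiNorm μ p A :=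
  Real.sInf_nonneg fun _ hlam => hlam.1.le

lemma lintegral_indicator_rpow_le_one (hp : ∀ᵐ ω ∂μ, 0 ≤ p ω) (A : Set Ω) :
    ∫⁻ ω, ENNReal.ofReal ((|A.indicator (1 : Ω → ℝ) ω| / 1) ^ p ω) ∂μ ≤ 1 := by
  calc ∫⁻ ω, ENNReal.ofReal ((|A.indicator (1 : Ω → ℝ) ω| / 1) ^ p ω) ∂μ
      ≤ ∫⁻ _, 1 ∂μ := by
        refine lintegral_mono_ae (hp.mono fun ω hω => ENNReal.ofReal_le_one.2 ?_)
        refine Real.rpow_le_one (by positivity) ?_ hω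
        by_cases h : ω ∈ A <;> simp [h]
    _ = 1 := by simp

lemma chiNorm_le_one (hp : ∀ᵐ ω ∂μ, 0 ≤ p ω) (A : Set Ω) : chiNorm μ p A ≤ 1 :=
  csInf_le ⟨0, fun _ hlam => hlam.1.le⟩ ⟨one_pos, lintegral_indicator_rpow_le_one hp A⟩

lemma chiNorm_mono (hp : ∀ᵐ ω ∂μ, 0 ≤ p ω) {A B : Set Ω} (hAB : A ⊆ B) :
    chiNorm μ p A ≤ chiNorm μ p B := by
  refine csInf_le_csInf ⟨0, fun _ hlam => hlam.1.le⟩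
    ⟨1, one_pos, lintegral_indicator_rpow_le_one hp B⟩ ?_
  rintro lam ⟨hlam, hmod⟩
  refine ⟨hlam, le_trans (lintegral_mono_ae (hp.mono fun ω hω => ?_)) hmod⟩
  have hind : |A.indicator (1 : Ω → ℝ) ω| ≤ |B.indicator (1 : Ω → ℝ) ω| :=
    abs_le_abs_of_nonneg (Set.indicator_nonneg (fun _ _ => zero_le_one) ω)
      (Set.indicator_le_indicator_of_subset hAB (fun _ => zero_le_one) ω)
  gcongr

lemma antitone_chiNorm_setOf_lt_abs (hp : ∀ᵐ ω ∂μ, 0 ≤ p ω) (f : Ω → ℝ) :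
    Antitone fun t => chiNorm μ p {ω | t < |f ω|} :=
  fun _ _ hst => chiNorm_mono hp fun _ hω => hst.trans_lt hω

end ChiNorm

section GammaB

variable {b b₁ b₂ : ℝ → ℝ} {x y : ℝ}

lemma gammaB_of_le_one (hx : 0 < x) (hx1 : x ≤ 1) : gammaB b x = b x⁻¹ := by
  rw [gammaB, max_eq_right (hx1.trans ((one_le_inv₀ hx).2 hx1))]

lemma mul_gammaB_nonneg (hb : ∀ t, 1 ≤ t → 0 < b t) (hx : 0 ≤ x) (hx1 : x ≤ 1) :
    0 ≤ x * gammaB b x := by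
  rcases hx.eq_or_lt with rfl | hx
  · rw [zero_mul]
  · rw [gammaB_of_le_one hx hx1]
    exact mul_nonneg hx.le (hb _ ((one_le_inv₀ hx).2 hx1)).le

lemma mul_gammaB_le_mul {M : ℝ} (hM : ∀ t, 1 ≤ t → b₂ t ≤ M * b₁ t) (hx : 0 ≤ x)
    (hx1 : x ≤ 1) : x * gammaB b₂ x ≤ M * (x * gammaB b₁ x) := by
  rcases hx.eq_or_lt with rfl | hx
  · rw [zero_mul, zero_mul, mul_zero]
  · rw [gammaB_of_le_one hx hx1, gammaB_of_le_one hx hx1, mul_left_comm]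
    exact mul_le_mul_of_nonneg_left (hM _ ((one_le_inv₀ hx).2 hx1)) hx.le

/-- Under `u = x⁻¹`, the quasi-monotonicity of `u⁻¹ b(u)` on `[1, ∞)` becomes that of
`x γ_b(x)` on `(0, 1]`. -/
lemma mul_gammaB_le_of_le {K : ℝ} (hb : ∀ t, 1 ≤ t → 0 < b t) (hK0 : 0 ≤ K)
    (hK : ∀ u v, 1 ≤ u → u ≤ v → v⁻¹ * b v ≤ K * (u⁻¹ * b u))
    (hy : 0 ≤ y) (hyx : y ≤ x) (hx1 : x ≤ 1) : y * gammaB b y ≤ K * (x * gammaB b x) := by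
  rcases hy.eq_or_lt with rfl | hy
  · rw [zero_mul]
    exact mul_nonneg hK0 (mul_gammaB_nonneg hb (hy.trans hyx) hx1)
  · have hx := hy.trans_le hyx
    rw [gammaB_of_le_one hy (hyx.trans hx1), gammaB_of_le_one hx hx1]
    simpa only [inv_inv] using
      hK x⁻¹ y⁻¹ ((one_le_inv₀ hx).2 hx1) (inv_anti₀ hy hyx)

lemma SlowlyVarying.exists_rpow_neg_mul_le (hb : SlowlyVarying b) {ε : ℝ} (hε : 0 < ε) :
    ∃ K, 1 ≤ K ∧ ∀ u v, 1 ≤ u → u ≤ v → v ^ (-ε) * b v ≤ K * (u ^ (-ε) * b u) := by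
  obtain ⟨-, g, hg, c, hc, C, hC, hgb⟩ := hb.2 ε hε
  refine ⟨max (C / c) 1, le_max_right _ _, fun u v hu huv => ?_⟩
  have hbu : 0 ≤ u ^ (-ε) * b u := by
    have := hb.1 u hu
    have : 0 ≤ u ^ (-ε) := Real.rpow_nonneg (zero_le_one.trans hu) _
    positivity
  calc v ^ (-ε) * b v ≤ C * g v := (hgb v (hu.trans huv)).2
    _ ≤ C * g u := mul_le_mul_of_nonneg_left (hg hu (hu.trans huv) huv) hC.le
    _ = C / c * (c * g u) := by field_simp
    _ ≤ C / c * (u ^ (-ε) * b u) := mul_le_mul_of_nonneg_left (hgb u hu).1 (by positivity)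
    _ ≤ max (C / c) 1 * (u ^ (-ε) * b u) := mul_le_mul_of_nonneg_right (le_max_left _ _) hbu

end GammaB

section DtDivT

/-- `‖g‖_{L^q((0,∞), dt/t)}`, read as `sup_{t>0} g t` when `q = ∞`. -/
def lqNormDtDivT (q : ℝ≥0∞) (g : ℝ → ℝ) : ℝ≥0∞ :=
  if q = ∞ then ⨆ t ∈ Ioi (0:ℝ), ENNReal.ofReal (g t)
  else (∫⁻ t in Ioi (0:ℝ), ENNReal.ofReal (g t ^ q.toReal / t)) ^ (1 / q.toReal)

lemma vLKNorm_eq_lqNormDtDivT (μ : Measure Ω) (p : Ω → ℝ) (q : ℝ≥0∞) (b : ℝ → ℝ)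
    (f : Ω → ℝ) :
    vLKNorm μ p q b f = lqNormDtDivT q fun t =>
      t * chiNorm μ p {ω | t < |f ω|} * gammaB b (chiNorm μ p {ω | t < |f ω|}) :=
  rfl

variable {g g₁ g₂ : ℝ → ℝ} {K M : ℝ}

lemma lqNormDtDivT_le_mul {q : ℝ≥0∞} (hq : q ≠ 0) (hM : 0 ≤ M)
    (hg₁ : ∀ t, 0 < t → 0 ≤ g₁ t) (hg₂ : ∀ t, 0 < t → 0 ≤ g₂ t)
    (h : ∀ t, 0 < t → g₂ t ≤ M * g₁ t) :
    lqNormDtDivT q g₂ ≤ ENNReal.ofReal M * lqNormDtDivT q g₁ := by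
  unfold lqNormDtDivT
  split_ifs with hq_top
  · refine iSup₂_le fun t ht => ?_
    calc ENNReal.ofReal (g₂ t) ≤ ENNReal.ofReal M * ENNReal.ofReal (g₁ t) := by
          rw [← ENNReal.ofReal_mul hM]
          exact ENNReal.ofReal_le_ofReal (h t ht)
      _ ≤ ENNReal.ofReal M * ⨆ t ∈ Ioi (0:ℝ), ENNReal.ofReal (g₁ t) := by
          gcongr
          exact le_iSup₂ (f := fun t (_ : t ∈ Ioi (0:ℝ)) => ENNReal.ofReal (g₁ t)) t ht
  · set r := q.toReal
    have hr : 0 < r := ENNReal.toReal_pos hq hq_top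
    calc (∫⁻ t in Ioi 0, ENNReal.ofReal (g₂ t ^ r / t)) ^ (1 / r)
        ≤ (∫⁻ t in Ioi 0, ENNReal.ofReal (M ^ r) * ENNReal.ofReal (g₁ t ^ r / t)) ^ (1 / r) := by
          gcongr ?_ ^ _
          refine setLIntegral_mono' measurableSet_Ioi fun t (ht : 0 < t) => ?_
          rw [← ENNReal.ofReal_mul (by positivity), ← mul_div_assoc,
            ← Real.mul_rpow hM (hg₁ t ht)]
          have := hg₂ t ht
          gcongr
          exact h t ht
      _ = ENNReal.ofReal M * (∫⁻ t in Ioi 0, ENNReal.ofReal (g₁ t ^ r / t)) ^ (1 / r) := by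
          rw [lintegral_const_mul' _ _ ENNReal.ofReal_ne_top,
            ENNReal.mul_rpow_of_nonneg _ _ (by positivity),
            ENNReal.ofReal_rpow_of_nonneg (by positivity) (by positivity), ← Real.rpow_mul hM,
            mul_one_div_cancel hr.ne', Real.rpow_one]

/-- On `(t/2, t)` the hypothesis gives `g s ≥ g t / (2K)`, and that interval has
`dt/t`-measure at least `1/2`. -/
lemma ofReal_le_mul_lintegral_rpow_div (hK : 0 < K) {q : ℝ} (hq : 0 < q)
    (hg : ∀ t, 0 < t → 0 ≤ g t) (hgK : ∀ s t, 0 < s → s ≤ t → s * g t ≤ K * t * g s)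
    {t : ℝ} (ht : 0 < t) :
    ENNReal.ofReal (g t) ≤ ENNReal.ofReal (2 * K * 2 ^ (1 / q)) *
      (∫⁻ s in Ioi 0, ENNReal.ofReal (g s ^ q / s)) ^ (1 / q) := by
  set a := g t / (2 * K)
  have ha : 0 ≤ a := div_nonneg (hg t ht) (by positivity)
  have hlow : ∀ s ∈ Ioo (t / 2) t, a ^ q / t ≤ g s ^ q / s := by
    rintro s ⟨hs, hst⟩
    have hs0 : 0 < s := by linarith
    have hgs := hg s hs0
    have hts : s * g t ≤ s * (g s * (2 * K)) :=
      calc s * g t ≤ K * t * g s := hgK s t hs0 hst.le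
        _ ≤ K * (2 * s) * g s := by gcongr; linarith
        _ = s * (g s * (2 * K)) := by ring
    have has : a ≤ g s := (div_le_iff₀ (by positivity)).2 (le_of_mul_le_mul_left hts hs0)
    have := Real.rpow_nonneg hgs q
    gcongr
  have hmass : ENNReal.ofReal (a ^ q / 2) ≤ ∫⁻ s in Ioi 0, ENNReal.ofReal (g s ^ q / s) :=
    calc ENNReal.ofReal (a ^ q / 2) = ∫⁻ _ in Ioo (t / 2) t, ENNReal.ofReal (a ^ q / t) := by
          rw [setLIntegral_const, Real.volume_Ioo, ← ENNReal.ofReal_mul (by positivity)]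
          congr 1
          field_simp
          ring
      _ ≤ ∫⁻ s in Ioo (t / 2) t, ENNReal.ofReal (g s ^ q / s) :=
          setLIntegral_mono' measurableSet_Ioo fun s hs => ENNReal.ofReal_le_ofReal (hlow s hs)
      _ ≤ ∫⁻ s in Ioi 0, ENNReal.ofReal (g s ^ q / s) :=
          lintegral_mono_set fun s hs => (half_pos ht).trans hs.1
  calc ENNReal.ofReal (g t) = ENNReal.ofReal (2 * K * 2 ^ (1 / q)) *
        ENNReal.ofReal (a ^ q / 2) ^ (1 / q) := by
        rw [ENNReal.ofReal_rpow_of_nonneg (by positivity) (by positivity),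
          ← ENNReal.ofReal_mul (by positivity), Real.div_rpow (by positivity) zero_le_two,
          ← Real.rpow_mul ha, mul_one_div_cancel hq.ne', Real.rpow_one]
        congr 1
        simp only [a]
        field_simp
    _ ≤ _ := by gcongr

lemma ofReal_le_mul_lqNormDtDivT (hK : 1 ≤ K) {q : ℝ≥0∞} (hq : q ≠ 0)
    (hg : ∀ t, 0 < t → 0 ≤ g t) (hgK : ∀ s t, 0 < s → s ≤ t → s * g t ≤ K * t * g s)
    {t : ℝ} (ht : 0 < t) :
    ENNReal.ofReal (g t) ≤ ENNReal.ofReal (2 * K * 2 ^ (1 / q.toReal)) * lqNormDtDivT q g := by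
  unfold lqNormDtDivT
  split_ifs with hq_top
  · have h2 : 1 ≤ (2:ℝ) ^ (1 / q.toReal) := Real.one_le_rpow one_le_two (by positivity)
    refine le_mul_of_one_le_of_le (ENNReal.one_le_ofReal.2 (by nlinarith)) ?_
    exact le_iSup₂ (f := fun t (_ : t ∈ Ioi (0:ℝ)) => ENNReal.ofReal (g t)) t ht
  · exact ofReal_le_mul_lintegral_rpow_div (by linarith) (ENNReal.toReal_pos hq hq_top) hg hgK ht

/-- Interpolation: `g ^ r₂ ≤ (sup g) ^ (r₂ - r₁) * g ^ r₁`. -/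
lemma lqNormDtDivT_le_mul_of_le (hK : 1 ≤ K) (hg : ∀ t, 0 < t → 0 ≤ g t)
    (hgK : ∀ s t, 0 < s → s ≤ t → s * g t ≤ K * t * g s) {q₁ q₂ : ℝ≥0∞} (hq₁ : q₁ ≠ 0)
    (hq : q₁ ≤ q₂) :
    lqNormDtDivT q₂ g ≤ ENNReal.ofReal (2 * K * 2 ^ (1 / q₁.toReal)) * lqNormDtDivT q₁ g := by
  have hC : 1 ≤ 2 * K * (2:ℝ) ^ (1 / q₁.toReal) := by
    have := Real.one_le_rpow one_le_two (by positivity : 0 ≤ 1 / q₁.toReal)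
    nlinarith
  set B := ENNReal.ofReal (2 * K * 2 ^ (1 / q₁.toReal)) * lqNormDtDivT q₁ g
  have hsup : ∀ t, 0 < t → ENNReal.ofReal (g t) ≤ B := fun t ht =>
    ofReal_le_mul_lqNormDtDivT hK hq₁ hg hgK ht
  have hIB : lqNormDtDivT q₁ g ≤ B := le_mul_of_one_le_left' (ENNReal.one_le_ofReal.2 hC)
  rw [lqNormDtDivT]
  split_ifs with hq₂
  · exact iSup₂_le hsup
  have hq₁_top : q₁ ≠ ∞ := ne_top_of_le_ne_top hq₂ hq
  rcases eq_or_ne (lqNormDtDivT q₁ g) ∞ with hI | hI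
  · have hB : B = ∞ := top_le_iff.1 (hI ▸ hIB)
    rw [hB]
    exact le_top
  have hB : B ≠ ∞ := ENNReal.mul_ne_top ENNReal.ofReal_ne_top hI
  set r₁ := q₁.toReal
  set r₂ := q₂.toReal
  have hr₁ : 0 < r₁ := ENNReal.toReal_pos hq₁ hq₁_top
  have hr : r₁ ≤ r₂ := ENNReal.toReal_mono hq₂ hq
  have hpt : ∀ t ∈ Ioi (0:ℝ), ENNReal.ofReal (g t ^ r₂ / t) ≤
      B ^ (r₂ - r₁) * ENNReal.ofReal (g t ^ r₁ / t) := fun t (ht : 0 < t) =>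
    calc ENNReal.ofReal (g t ^ r₂ / t)
        = ENNReal.ofReal (g t) ^ (r₂ - r₁) * ENNReal.ofReal (g t ^ r₁ / t) := by
          rw [ENNReal.ofReal_rpow_of_nonneg (hg t ht) (by linarith),
            ← ENNReal.ofReal_mul (by have := hg t ht; positivity), ← mul_div_assoc,
            ← Real.rpow_add' (hg t ht) (by linarith), sub_add_cancel]
      _ ≤ B ^ (r₂ - r₁) * ENNReal.ofReal (g t ^ r₁ / t) := by
          gcongr
          exact hsup t ht
  calc (∫⁻ t in Ioi 0, ENNReal.ofReal (g t ^ r₂ / t)) ^ (1 / r₂)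
      ≤ (B ^ (r₂ - r₁) * ∫⁻ t in Ioi 0, ENNReal.ofReal (g t ^ r₁ / t)) ^ (1 / r₂) := by
        rw [← lintegral_const_mul' _ _ (ENNReal.rpow_ne_top_of_nonneg (by linarith) hB)]
        gcongr ?_ ^ _
        exact setLIntegral_mono' measurableSet_Ioi hpt
    _ = (B ^ (r₂ - r₁) * lqNormDtDivT q₁ g ^ r₁) ^ (1 / r₂) := by
        rw [lqNormDtDivT, if_neg hq₁_top, ← ENNReal.rpow_mul, one_div_mul_cancel hr₁.ne',
          ENNReal.rpow_one]
    _ ≤ (B ^ (r₂ - r₁) * B ^ r₁) ^ (1 / r₂) := by gcongr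
    _ = B := by
        rw [← ENNReal.rpow_add_of_nonneg _ _ (by linarith) hr₁.le, sub_add_cancel,
          ← ENNReal.rpow_mul, mul_one_div_cancel (by linarith), ENNReal.rpow_one]

end DtDivT

section VLKNorm

variable {μ : Measure Ω} [IsProbabilityMeasure μ] {p : Ω → ℝ} {b b₁ b₂ : ℝ → ℝ}

lemma mul_chiNorm_mul_gammaB_nonneg (hp : ∀ᵐ ω ∂μ, 0 ≤ p ω) (hb : ∀ t, 1 ≤ t → 0 < b t)
    (f : Ω → ℝ) {t : ℝ} (ht : 0 ≤ t) :
    0 ≤ t * chiNorm μ p {ω | t < |f ω|} * gammaB b (chiNorm μ p {ω | t < |f ω|}) :=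
  mul_assoc t _ _ ▸
    mul_nonneg ht (mul_gammaB_nonneg hb (chiNorm_nonneg μ p _) (chiNorm_le_one hp _))

lemma vLKNorm_le_ofReal_mul_of_le_mul (hp : ∀ᵐ ω ∂μ, 0 ≤ p ω) {q : ℝ≥0∞} (hq : q ≠ 0)
    (hb₁ : ∀ t, 1 ≤ t → 0 < b₁ t) (hb₂ : ∀ t, 1 ≤ t → 0 < b₂ t) {M : ℝ} (hM : 0 ≤ M)
    (hb : ∀ t, 1 ≤ t → b₂ t ≤ M * b₁ t) (f : Ω → ℝ) :
    vLKNorm μ p q b₂ f ≤ ENNReal.ofReal M * vLKNorm μ p q b₁ f := by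
  refine lqNormDtDivT_le_mul hq hM (fun t ht => mul_chiNorm_mul_gammaB_nonneg hp hb₁ f ht.le)
    (fun t ht => mul_chiNorm_mul_gammaB_nonneg hp hb₂ f ht.le) fun t ht => ?_
  simpa only [mul_assoc, mul_left_comm M] using mul_le_mul_of_nonneg_left
    (mul_gammaB_le_mul hb (chiNorm_nonneg μ p _) (chiNorm_le_one hp _)) ht.le

lemma vLKNorm_le_ofReal_mul_of_le (hp : ∀ᵐ ω ∂μ, 0 ≤ p ω) (hb : ∀ t, 1 ≤ t → 0 < b t)
    {K : ℝ} (hK : 1 ≤ K) (hbK : ∀ u v, 1 ≤ u → u ≤ v → v⁻¹ * b v ≤ K * (u⁻¹ * b u))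
    {q₁ q₂ : ℝ≥0∞} (hq₁ : q₁ ≠ 0) (hq : q₁ ≤ q₂) (f : Ω → ℝ) :
    vLKNorm μ p q₂ b f ≤ ENNReal.ofReal (2 * K * 2 ^ (1 / q₁.toReal)) * vLKNorm μ p q₁ b f := by
  refine lqNormDtDivT_le_mul_of_le hK (fun t ht => mul_chiNorm_mul_gammaB_nonneg hp hb f ht.le)
    (fun s t hs hst => ?_) hq₁ hq
  set N := fun t => chiNorm μ p {ω | t < |f ω|}
  have hN := mul_gammaB_le_of_le hb (by linarith) hbK (chiNorm_nonneg μ p _)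
    (antitone_chiNorm_setOf_lt_abs hp f hst) (chiNorm_le_one hp _)
  calc s * (t * N t * gammaB b (N t)) = s * t * (N t * gammaB b (N t)) := by ring
    _ ≤ s * t * (K * (N s * gammaB b (N s))) :=
      mul_le_mul_of_nonneg_left hN (mul_pos hs (hs.trans_le hst)).le
    _ = K * t * (s * N s * gammaB b (N s)) := by ring

end VLKNorm

theorem vLKNorm_embedding_general (μ : Measure Ω) [IsProbabilityMeasure μ]
    (p : Ω → ℝ) (pl pu : ℝ) (hpl : 0 < pl)
    (hp : ∀ᵐ ω ∂μ, pl ≤ p ω ∧ p ω ≤ pu)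
    (q₁ q₂ : ℝ≥0∞) (hq₁ : 0 < q₁) (hq : q₁ ≤ q₂)
    (b₁ b₂ : ℝ → ℝ) (hb₁ : SlowlyVarying b₁) (hb₂ : SlowlyVarying b₂)
    (hbb : ∃ M : ℝ, ∀ t : ℝ, 1 ≤ t → b₂ t / b₁ t ≤ M) :
    ∃ C > (0:ℝ), ∀ f : Ω → ℝ, Measurable f →
      vLKNorm μ p q₂ b₂ f ≤ ENNReal.ofReal C * vLKNorm μ p q₁ b₁ f := by
  have hp₀ : ∀ᵐ ω ∂μ, 0 ≤ p ω := hp.mono fun ω h => hpl.le.trans h.1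
  obtain ⟨K, hK, hb₁K⟩ := hb₁.exists_rpow_neg_mul_le one_pos
  simp only [Real.rpow_neg_one] at hb₁K
  obtain ⟨M₀, hM₀⟩ := hbb
  have hM : 0 < max M₀ 1 := one_pos.trans_le (le_max_right _ _)
  have hb₂M : ∀ t, 1 ≤ t → b₂ t ≤ max M₀ 1 * b₁ t := fun t ht =>
    (div_le_iff₀ (hb₁.1 t ht)).1 ((hM₀ t ht).trans (le_max_left _ _))
  refine ⟨max M₀ 1 * (2 * K * 2 ^ (1 / q₁.toReal)), by positivity, fun f _ => ?_⟩
  calc vLKNorm μ p q₂ b₂ f ≤ ENNReal.ofReal (max M₀ 1) * vLKNorm μ p q₂ b₁ f :=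
        vLKNorm_le_ofReal_mul_of_le_mul hp₀ (hq₁.trans_le hq).ne' hb₁.1 hb₂.1 hM.le hb₂M f
    _ ≤ ENNReal.ofReal (max M₀ 1) *
        (ENNReal.ofReal (2 * K * 2 ^ (1 / q₁.toReal)) * vLKNorm μ p q₁ b₁ f) := by
        gcongr
        exact vLKNorm_le_ofReal_mul_of_le hp₀ hb₁.1 hK hb₁K hq₁.ne' hq f
    _ = _ := by rw [ENNReal.ofReal_mul hM.le, mul_assoc (ENNReal.ofReal (max M₀ 1))]

/-- Embedding of variable Lorentz–Karamata spaces: if `0 < q₁ ≤ q₂ ≤ ∞` and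
`sup_{t≥1} b₂(t)/b₁(t) < ∞`, then `L_{p(·),q₁,b₁} ⊆ L_{p(·),q₂,b₂}` with
`‖f‖_{p(·),q₂,b₂} ≲ ‖f‖_{p(·),q₁,b₁}`. -/
theorem vLKNorm_embedding (μ : Measure Ω) [IsProbabilityMeasure μ]
    (p : Ω → ℝ) (pl pu : ℝ) (hpl : 0 < pl) (hple : pl ≤ pu)
    (hp : ∀ᵐ ω ∂μ, pl ≤ p ω ∧ p ω ≤ pu)
    (q₁ q₂ : ℝ≥0∞) (hq₁ : 0 < q₁) (hq : q₁ ≤ q₂)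
    (b₁ b₂ : ℝ → ℝ) (hb₁ : SlowlyVarying b₁) (hb₂ : SlowlyVarying b₂)
    (hbb : ∃ M : ℝ, ∀ t : ℝ, 1 ≤ t → b₂ t / b₁ t ≤ M) :
    ∃ C > (0:ℝ), ∀ f : Ω → ℝ, Measurable f →
      vLKNorm μ p q₂ b₂ f ≤ ENNReal.ofReal C * vLKNorm μ p q₁ b₁ f :=
  vLKNorm_embedding_general μ p pl pu hpl hp q₁ q₂ hq₁ hq b₁ b₂ hb₁ hb₂ hbb
end
end
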